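/- arXiv:cs/0506020 — 3 statements merged into one kernel-verified Lean document; each statement's English description precedes it below -/
import Mathlib

section
/- Fix an integer L ≥ 1 and a real P > 0, and let F(x) = 1 − e^{−Lx} Σ_{k=0}^{L−1} (Lx)^k / k! with density f(x) = L e^{−Lx} (Lx)^{L−1}/(L−1)! for x ≥ 0. Then the throughput of the best-user scheduler with L transmit antennas, R_tot(N) = ∫_0^∞ log(1+Px) · N F(x)^{N−1} f(x) dx, satisfies R_tot(N) = Θ( log(1 + (log N + (L−1) log log N)/L) ): there exist constants 0 < c₁ ≤ c₂ and N₀ such that c₁ · log(1 + (log N + (L−1) log log N)/L) ≤ R_tot(N) ≤ c₂ · log(1 + (log N + (L−1) log log N)/L) for all N ≥ N₀. -/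
/-!
Since `L` is fixed, Bernoulli's inequality shows that `log (1 + (log N + (L - 1) log log N) / L)`
lies between `log (1 + log N) / L` and `log (1 + log N)`, so it suffices to show that the
throughput is `Θ(log (1 + log N))`.

Lower bound: the Erlang tail is at least `e^{-Lx}`, so the best gain exceeds `b = log N / L` with
probability at least `1 - (1 - 1/N)^N ≥ 1/2`, and `log (1 + P b) ≳ log (1 + log N)`.

Upper bound: split the integral at `a = 2 log N / L`. Below `a` the integrand is at most
`log (1 + P a) ≲ log (1 + log N)` times the density. Above `a` use `log (1 + P x) ≤ P x` and
`N F^{N-1} f ≤ N f`; since `x f(x) ≤ L 2^L e^{-Lx/2}`, this tail contributes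
`O(N e^{-La/2}) = O(1)`.
-/

open Real Set Finset MeasureTheory Filter Topology
open scoped Nat

namespace BestUserScheduling

section LogOneAdd

variable {c y : ℝ}

theorem mul_log_one_add_le_log_one_add_mul (hc₀ : 0 ≤ c) (hc₁ : c ≤ 1) (hy : 0 ≤ y) :
    c * log (1 + y) ≤ log (1 + c * y) := by
  rw [← log_rpow (by linarith)]
  exact log_le_log (by positivity) (rpow_one_add_le_one_add_mul_self (by linarith) hc₀ hc₁)

theorem min_mul_log_one_add_le_log_one_add_mul (hc : 0 ≤ c) (hy : 0 ≤ y) :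
    min c 1 * log (1 + y) ≤ log (1 + c * y) :=
  calc min c 1 * log (1 + y) ≤ log (1 + min c 1 * y) :=
        mul_log_one_add_le_log_one_add_mul (le_min hc zero_le_one) (min_le_right c 1) hy
    _ ≤ log (1 + c * y) := by gcongr; exact min_le_left c 1

theorem log_one_add_mul_le (hc : 0 ≤ c) (hy : 0 ≤ y) :
    log (1 + c * y) ≤ log (1 + c) + log (1 + y) := by
  rw [← log_mul (by positivity) (by positivity)]
  exact log_le_log (by positivity) (by nlinarith [mul_nonneg hc hy])

end LogOneAdd

noncomputable def expPartialSum (n : ℕ) (t : ℝ) : ℝ := ∑ k ∈ range n, t ^ k / k !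

theorem hasDerivAt_expPartialSum_succ (n : ℕ) (t : ℝ) :
    HasDerivAt (expPartialSum (n + 1)) (expPartialSum n t) t := by
  induction n with
  | zero =>
    have h : expPartialSum 1 = fun _ => 1 := by ext; simp [expPartialSum]
    simpa [h, expPartialSum] using hasDerivAt_const t (1 : ℝ)
  | succ n ih =>
    have hsplit : expPartialSum (n + 2) =
        fun s => expPartialSum (n + 1) s + s ^ (n + 1) / (n + 1)! := by
      ext s; exact sum_range_succ _ _
    rw [hsplit]
    refine (ih.add ((hasDerivAt_pow (n + 1) t).div_const ((n + 1)! : ℝ))).congr_deriv ?_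
    simp only [expPartialSum, sum_range_succ _ n, Nat.factorial_succ, Nat.add_sub_cancel]
    push_cast
    field_simp

theorem hasDerivAt_exp_neg_mul_expPartialSum (n : ℕ) (t : ℝ) :
    HasDerivAt (fun s => exp (-s) * expPartialSum (n + 1) s) (-(exp (-t) * t ^ n / n !)) t := by
  refine (((hasDerivAt_neg t).exp).mul (hasDerivAt_expPartialSum_succ n t)).congr_deriv ?_
  simp only [expPartialSum, sum_range_succ _ n]
  ring

theorem one_le_expPartialSum {n : ℕ} (hn : n ≠ 0) {t : ℝ} (ht : 0 ≤ t) :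
    1 ≤ expPartialSum n t := by
  simpa [expPartialSum] using single_le_sum (f := fun k => t ^ k / k !) (fun k _ => by positivity)
    (mem_range.2 (Nat.pos_of_ne_zero hn))

theorem expPartialSum_zero_right {n : ℕ} (hn : n ≠ 0) : expPartialSum n 0 = 1 := by
  obtain ⟨n, rfl⟩ := Nat.exists_eq_succ_of_ne_zero hn
  simp [expPartialSum, sum_range_succ']

theorem tendsto_exp_neg_mul_expPartialSum (n : ℕ) :
    Tendsto (fun t => exp (-t) * expPartialSum n t) atTop (𝓝 0) := by
  simp only [expPartialSum, mul_sum]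
  rw [← sum_const_zero (s := range n)]
  refine tendsto_finsetSum _ fun k _ => ?_
  simpa [mul_div_right_comm, mul_comm] using
    (tendsto_pow_mul_exp_neg_atTop_nhds_zero k).div_const (k ! : ℝ)

theorem pow_mul_exp_neg_div_factorial_le (n : ℕ) {t : ℝ} (ht : 0 ≤ t) :
    t ^ n * exp (-t) / n ! ≤ 2 ^ n * exp (-(t / 2)) :=
  calc t ^ n * exp (-t) / n ! = 2 ^ n * ((t / 2) ^ n / n !) * exp (-t) := by
        rw [div_pow]; field_simp
    _ ≤ 2 ^ n * exp (t / 2) * exp (-t) := by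
        gcongr; exact pow_div_factorial_le_exp _ (by positivity) n
    _ = 2 ^ n * exp (-(t / 2)) := by rw [mul_assoc, ← exp_add]; ring_nf

/-- The Erlang law with shape and rate `L`: the χ² law with `2L` degrees of freedom, scaled to
mean `1`. -/
noncomputable def erlangCDF (L : ℕ) (x : ℝ) : ℝ := 1 - exp (-L * x) * expPartialSum L (L * x)

noncomputable def erlangPDF (L : ℕ) (x : ℝ) : ℝ :=
  L * exp (-L * x) * (L * x) ^ (L - 1) / (L - 1)!

section Erlang

variable {L : ℕ} {x : ℝ}

theorem hasDerivAt_erlangCDF (hL : 1 ≤ L) (x : ℝ) :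
    HasDerivAt (erlangCDF L) (erlangPDF L x) x := by
  obtain ⟨n, rfl⟩ : ∃ n, L = n + 1 := ⟨L - 1, by omega⟩
  have hfun : erlangCDF (n + 1) =
      fun y => 1 - (fun s => exp (-s) * expPartialSum (n + 1) s) ((n + 1 : ℕ) * y) := by
    ext y; simp only [erlangCDF, neg_mul]
  rw [hfun]
  refine ((hasDerivAt_const x 1).sub ((hasDerivAt_exp_neg_mul_expPartialSum n _).comp x
    ((hasDerivAt_id x).const_mul _))).congr_deriv ?_
  simp only [erlangPDF, Nat.add_sub_cancel, neg_mul, id]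
  ring

theorem erlangCDF_zero (hL : 1 ≤ L) : erlangCDF L 0 = 0 := by
  simp [erlangCDF, expPartialSum_zero_right (by omega : L ≠ 0)]

theorem erlangCDF_nonneg (hx : 0 ≤ x) : 0 ≤ erlangCDF L x := by
  have h : exp (-L * x) * expPartialSum L (L * x) ≤ exp (-L * x) * exp (L * x) :=
    mul_le_mul_of_nonneg_left (sum_le_exp_of_nonneg (by positivity) L) (exp_pos _).le
  rw [← exp_add, neg_mul, neg_add_cancel, exp_zero] at h
  rw [erlangCDF, neg_mul]
  linarith

theorem erlangCDF_le_one_sub_exp (hL : 1 ≤ L) (hx : 0 ≤ x) :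
    erlangCDF L x ≤ 1 - exp (-L * x) := by
  have h := mul_le_mul_of_nonneg_left (one_le_expPartialSum (by omega : L ≠ 0)
    (by positivity : (0 : ℝ) ≤ L * x)) (exp_pos (-L * x)).le
  rw [erlangCDF]
  linarith

theorem erlangCDF_le_one (hL : 1 ≤ L) (hx : 0 ≤ x) : erlangCDF L x ≤ 1 :=
  (erlangCDF_le_one_sub_exp hL hx).trans (by linarith [exp_pos (-L * x)])

theorem tendsto_erlangCDF_atTop (hL : 1 ≤ L) : Tendsto (erlangCDF L) atTop (𝓝 1) := by
  have hlin : Tendsto (fun x : ℝ => L * x) atTop atTop :=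
    tendsto_id.const_mul_atTop (by exact_mod_cast hL)
  have h := (tendsto_const_nhds (x := (1 : ℝ))).sub
    ((tendsto_exp_neg_mul_expPartialSum L).comp hlin)
  rw [sub_zero] at h
  exact h.congr fun x => by simp [erlangCDF, neg_mul]

theorem erlangPDF_nonneg (hx : 0 ≤ x) : 0 ≤ erlangPDF L x := by
  unfold erlangPDF; positivity

theorem mul_erlangPDF_le (hL : 1 ≤ L) (hx : 0 ≤ x) :
    x * erlangPDF L x ≤ L * 2 ^ L * exp (-(L / 2) * x) := by
  have hid : x * erlangPDF L x = L * ((L * x) ^ L * exp (-(L * x)) / L !) := by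
    obtain ⟨n, rfl⟩ : ∃ n, L = n + 1 := ⟨L - 1, by omega⟩
    simp only [erlangPDF, Nat.add_sub_cancel, Nat.factorial_succ, neg_mul]
    push_cast
    field_simp
    ring
  calc x * erlangPDF L x ≤ L * (2 ^ L * exp (-(L * x / 2))) := by
        rw [hid]; gcongr; exact pow_mul_exp_neg_div_factorial_le L (by positivity)
    _ = L * 2 ^ L * exp (-(L / 2) * x) := by ring_nf

end Erlang

noncomputable def maxPDF (F f : ℝ → ℝ) (N : ℕ) (x : ℝ) : ℝ := N * F x ^ (N - 1) * f x

section MaxPDF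

variable {F f : ℝ → ℝ} {N : ℕ} {b : ℝ}

theorem integrableOn_Ioi_maxPDF (hF : ∀ x, HasDerivAt F (f x) x)
    (hF1 : Tendsto F atTop (𝓝 1)) (hnonneg : ∀ x ∈ Ioi b, 0 ≤ maxPDF F f N x) :
    IntegrableOn (maxPDF F f N) (Ioi b) :=
  integrableOn_Ioi_deriv_of_nonneg' (fun x _ => (hF x).pow N) hnonneg (hF1.pow N)

theorem integral_Ioi_maxPDF (hF : ∀ x, HasDerivAt F (f x) x)
    (hF1 : Tendsto F atTop (𝓝 1)) (hnonneg : ∀ x ∈ Ioi b, 0 ≤ maxPDF F f N x) :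
    ∫ x in Ioi b, maxPDF F f N x = 1 - F b ^ N := by
  have h := integral_Ioi_of_hasDerivAt_of_nonneg' (g' := maxPDF F f N) (fun x _ => (hF x).pow N)
    hnonneg (hF1.pow N)
  rwa [one_pow] at h

end MaxPDF

noncomputable def throughput (L : ℕ) (P : ℝ) (N : ℕ) : ℝ :=
  ∫ x in Ioi 0, log (1 + P * x) * maxPDF (erlangCDF L) (erlangPDF L) N x

section Throughput

variable {L N : ℕ} {P x a b : ℝ}

theorem maxPDF_erlang_nonneg (hx : 0 ≤ x) : 0 ≤ maxPDF (erlangCDF L) (erlangPDF L) N x := by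
  have := erlangCDF_nonneg (L := L) hx
  have := erlangPDF_nonneg (L := L) hx
  unfold maxPDF; positivity

theorem maxPDF_erlang_le (hL : 1 ≤ L) (hx : 0 ≤ x) :
    maxPDF (erlangCDF L) (erlangPDF L) N x ≤ N * erlangPDF L x := by
  have h := pow_le_one₀ (n := N - 1) (erlangCDF_nonneg hx) (erlangCDF_le_one hL hx)
  have := erlangPDF_nonneg (L := L) hx
  unfold maxPDF
  calc N * erlangCDF L x ^ (N - 1) * erlangPDF L x ≤ N * 1 * erlangPDF L x := by gcongr
    _ = N * erlangPDF L x := by ring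

theorem integrableOn_Ioi_maxPDF_erlang (hL : 1 ≤ L) (hb : 0 ≤ b) :
    IntegrableOn (maxPDF (erlangCDF L) (erlangPDF L) N) (Ioi b) :=
  integrableOn_Ioi_maxPDF (hasDerivAt_erlangCDF hL) (tendsto_erlangCDF_atTop hL)
    fun _ hx => maxPDF_erlang_nonneg (hb.trans hx.out.le)

theorem integral_Ioi_maxPDF_erlang (hL : 1 ≤ L) (hb : 0 ≤ b) :
    ∫ x in Ioi b, maxPDF (erlangCDF L) (erlangPDF L) N x = 1 - erlangCDF L b ^ N :=
  integral_Ioi_maxPDF (hasDerivAt_erlangCDF hL) (tendsto_erlangCDF_atTop hL)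
    fun _ hx => maxPDF_erlang_nonneg (hb.trans hx.out.le)

theorem log_one_add_mul_mul_maxPDF_erlang_nonneg (hP : 0 ≤ P) (hx : 0 ≤ x) :
    0 ≤ log (1 + P * x) * maxPDF (erlangCDF L) (erlangPDF L) N x :=
  mul_nonneg (log_nonneg (by nlinarith)) (maxPDF_erlang_nonneg hx)

theorem log_one_add_mul_mul_maxPDF_erlang_le (hL : 1 ≤ L) (hP : 0 ≤ P) (hx : 0 ≤ x) :
    log (1 + P * x) * maxPDF (erlangCDF L) (erlangPDF L) N x ≤
      N * P * L * 2 ^ L * exp (-(L / 2) * x) :=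
  calc log (1 + P * x) * maxPDF (erlangCDF L) (erlangPDF L) N x
      ≤ P * x * (N * erlangPDF L x) :=
        mul_le_mul (by linarith [log_le_sub_one_of_pos (by positivity : 0 < 1 + P * x)])
          (maxPDF_erlang_le hL hx) (maxPDF_erlang_nonneg hx) (by positivity)
    _ = N * P * (x * erlangPDF L x) := by ring
    _ ≤ N * P * (L * 2 ^ L * exp (-(L / 2) * x)) := 
        mul_le_mul_of_nonneg_left (mul_erlangPDF_le hL hx) (by positivity)
    _ = N * P * L * 2 ^ L * exp (-(L / 2) * x) := by ring

theorem integrableOn_log_one_add_mul_mul_maxPDF_erlang (hL : 1 ≤ L) (hP : 0 ≤ P) :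
    IntegrableOn (fun x => log (1 + P * x) * maxPDF (erlangCDF L) (erlangPDF L) N x) (Ioi 0) := by
  have hL0 : (0 : ℝ) < L := by exact_mod_cast hL
  refine ((integrableOn_exp_mul_Ioi (by linarith : -((L : ℝ) / 2) < 0) 0).const_mul
    (N * P * L * 2 ^ L)).mono' ?_ ?_
  · have hcont : Continuous (maxPDF (erlangCDF L) (erlangPDF L) N) := by
      have := continuous_iff_continuousAt.2 fun x => (hasDerivAt_erlangCDF hL x).continuousAt
      unfold maxPDF erlangPDF; fun_prop
    exact (measurable_log.comp (by fun_prop)).mul hcont.measurable |>.aestronglyMeasurable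
  · filter_upwards [ae_restrict_mem measurableSet_Ioi] with x hx
    rw [norm_of_nonneg (log_one_add_mul_mul_maxPDF_erlang_nonneg hP hx.out.le)]
    exact log_one_add_mul_mul_maxPDF_erlang_le hL hP hx.out.le

theorem log_one_add_mul_mul_le_throughput (hL : 1 ≤ L) (hP : 0 ≤ P) (hb : 0 ≤ b) :
    log (1 + P * b) * (1 - erlangCDF L b ^ N) ≤ throughput L P N := by
  have hint := integrableOn_log_one_add_mul_mul_maxPDF_erlang (N := N) hL hP
  calc log (1 + P * b) * (1 - erlangCDF L b ^ N)
      = ∫ x in Ioi b, log (1 + P * b) * maxPDF (erlangCDF L) (erlangPDF L) N x := by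
        rw [integral_const_mul, integral_Ioi_maxPDF_erlang hL hb]
    _ ≤ ∫ x in Ioi b, log (1 + P * x) * maxPDF (erlangCDF L) (erlangPDF L) N x := by
        refine setIntegral_mono_on ((integrableOn_Ioi_maxPDF_erlang hL hb).const_mul _)
          (hint.mono_set (Ioi_subset_Ioi hb)) measurableSet_Ioi fun x hx => ?_
        have hbx : b ≤ x := hx.out.le
        exact mul_le_mul_of_nonneg_right (log_le_log (by positivity) (by gcongr))
          (maxPDF_erlang_nonneg (hb.trans hbx))
    _ ≤ throughput L P N := by
        refine setIntegral_mono_set hint ?_ (Ioi_subset_Ioi hb).eventuallyLE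
        filter_upwards [ae_restrict_mem measurableSet_Ioi] with x hx
        exact log_one_add_mul_mul_maxPDF_erlang_nonneg hP hx.out.le

theorem throughput_le (hL : 1 ≤ L) (hP : 0 ≤ P) (ha : 0 ≤ a) :
    throughput L P N ≤ log (1 + P * a) + N * P * 2 ^ (L + 1) * exp (-(L / 2) * a) := by
  have hL0 : (0 : ℝ) < L := by exact_mod_cast hL
  set tail := fun x : ℝ => N * P * L * 2 ^ L * exp (-(L / 2) * x)
  have hmaxPDF := integrableOn_Ioi_maxPDF_erlang (N := N) hL le_rfl
  have htail : IntegrableOn ((Ioi a).indicator tail) (Ioi 0) :=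
    ((integrableOn_exp_mul_Ioi (by linarith : -((L : ℝ) / 2) < 0) 0).const_mul _).indicator
      measurableSet_Ioi
  have hsplit : ∀ x ∈ Ioi (0 : ℝ),
      log (1 + P * x) * maxPDF (erlangCDF L) (erlangPDF L) N x ≤
        log (1 + P * a) * maxPDF (erlangCDF L) (erlangPDF L) N x + (Ioi a).indicator tail x := by
    intro x hx
    have hx0 : 0 ≤ x := hx.out.le
    have hD := maxPDF_erlang_nonneg (L := L) (N := N) hx0
    rcases le_or_gt x a with hxa | hax
    · have : log (1 + P * x) ≤ log (1 + P * a) := log_le_log (by positivity) (by gcongr)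
      have : 0 ≤ (Ioi a).indicator tail x := indicator_nonneg (fun y _ => by positivity) x
      nlinarith
    · rw [indicator_of_mem (Set.mem_Ioi.2 hax)]
      have := mul_nonneg (log_nonneg (by nlinarith : 1 ≤ 1 + P * a)) hD
      linarith [log_one_add_mul_mul_maxPDF_erlang_le (N := N) hL hP hx0]
  calc throughput L P N
      ≤ ∫ x in Ioi 0, (log (1 + P * a) * maxPDF (erlangCDF L) (erlangPDF L) N x +
          (Ioi a).indicator tail x) :=
        setIntegral_mono_on (integrableOn_log_one_add_mul_mul_maxPDF_erlang hL hP)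
          ((hmaxPDF.const_mul _).add htail) measurableSet_Ioi hsplit
    _ = log (1 + P * a) * (1 - 0 ^ N) + ∫ x in Ioi a, tail x := by
        rw [integral_add (hmaxPDF.const_mul _) htail, integral_const_mul,
          integral_Ioi_maxPDF_erlang hL le_rfl, erlangCDF_zero hL,
          setIntegral_indicator measurableSet_Ioi, Ioi_inter_Ioi, sup_of_le_right ha]
    _ ≤ log (1 + P * a) + N * P * 2 ^ (L + 1) * exp (-(L / 2) * a) := by
        have hlog : 0 ≤ log (1 + P * a) := log_nonneg (by nlinarith)
        have hintegral : ∫ x in Ioi a, tail x = N * P * 2 ^ (L + 1) * exp (-(L / 2) * a) := by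
          rw [integral_const_mul, integral_exp_mul_Ioi (by linarith) a]
          field_simp
          ring
        rw [hintegral]
        nlinarith [pow_nonneg (le_refl (0 : ℝ)) N]

theorem min_mul_log_one_add_log_le_throughput (hL : 1 ≤ L) (hP : 0 ≤ P) (hN : 1 ≤ N) :
    min (P / L) 1 / 2 * log (1 + log N) ≤ throughput L P N := by
  have hL0 : (0 : ℝ) < L := by exact_mod_cast hL
  have hN0 : (0 : ℝ) < N := by exact_mod_cast hN
  have hlogN := log_natCast_nonneg N
  have hb : 0 ≤ log N / L := by positivity
  have hexp : exp (-L * (log N / L)) = 1 / N := by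
    rw [neg_mul, mul_div_cancel₀ _ hL0.ne', exp_neg, exp_log hN0, one_div]
  have hFN : erlangCDF L (log N / L) ^ N ≤ 1 / 2 :=
    calc erlangCDF L (log N / L) ^ N ≤ (1 - 1 / N) ^ N := by
          gcongr
          · exact erlangCDF_nonneg hb
          · rw [← hexp]; exact erlangCDF_le_one_sub_exp hL hb
      _ ≤ exp (-1) := one_sub_div_pow_le_exp_neg (by exact_mod_cast hN)
      _ ≤ 1 / 2 := by
          rw [exp_neg, one_div]
          exact inv_anti₀ two_pos (by linarith [add_one_le_exp (1 : ℝ)])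
  have hlog := min_mul_log_one_add_le_log_one_add_mul (div_nonneg hP hL0.le) hlogN
  have hPb : P / L * log N = P * (log N / L) := by ring
  rw [hPb] at hlog
  have hlogb : 0 ≤ log (1 + P * (log N / L)) := log_nonneg (by nlinarith)
  calc min (P / L) 1 / 2 * log (1 + log N) ≤ log (1 + P * (log N / L)) * (1 / 2) := by linarith
    _ ≤ log (1 + P * (log N / L)) * (1 - erlangCDF L (log N / L) ^ N) := by gcongr; linarith
    _ ≤ throughput L P N := log_one_add_mul_mul_le_throughput hL hP hb

theorem throughput_le_mul_log_one_add_log (hL : 1 ≤ L) (hP : 0 ≤ P)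
    (hN : 1 ≤ log (1 + log N)) :
    throughput L P N ≤ (1 + log (1 + 2 * P / L) + P * 2 ^ (L + 1)) * log (1 + log N) := by
  have hL0 : (0 : ℝ) < L := by exact_mod_cast hL
  have hlogN := log_natCast_nonneg N
  have htail : N * exp (-(L / 2) * (2 * log N / L)) ≤ 1 := by
    rw [show -(L / 2 : ℝ) * (2 * log N / L) = -log N by field_simp, exp_neg]
    rcases (Nat.cast_nonneg (α := ℝ) N).eq_or_lt with hN0 | hN0
    · simp [← hN0]
    · rw [exp_log hN0, mul_inv_cancel₀ hN0.ne']
  have hPL : 0 ≤ 2 * P / L := by positivity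
  have hsplit := throughput_le (N := N) hL hP (by positivity : 0 ≤ 2 * log N / L)
  have hPa : P * (2 * log N / L) = 2 * P / L * log N := by ring
  rw [hPa] at hsplit
  have h2L : 0 ≤ P * 2 ^ (L + 1) := by positivity
  have hlog2 : 0 ≤ log (1 + 2 * P / L) := log_nonneg (by linarith [hPL])
  calc throughput L P N
      ≤ log (1 + 2 * P / L * log N) +
          P * 2 ^ (L + 1) * (N * exp (-(L / 2) * (2 * log N / L))) := by linarith
    _ ≤ log (1 + 2 * P / L) + log (1 + log N) + P * 2 ^ (L + 1) * 1 := by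
        gcongr; exact log_one_add_mul_le hPL hlogN
    _ ≤ (1 + log (1 + 2 * P / L) + P * 2 ^ (L + 1)) * log (1 + log N) := by nlinarith

end Throughput

section GrowthRate

variable {L : ℕ} {y : ℝ}

theorem log_one_add_growth_le (hL : 1 ≤ L) (hy : 1 ≤ y) :
    log (1 + (y + (L - 1) * log y) / L) ≤ log (1 + y) := by
  have hL1 : (1 : ℝ) ≤ L := by exact_mod_cast hL
  have hlog : log y ≤ y := log_le_self (by linarith)
  have hlog0 : 0 ≤ log y := log_nonneg hy
  refine log_le_log (by positivity) ?_
  rw [add_le_add_iff_left, div_le_iff₀ (by positivity)]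
  nlinarith

theorem log_one_add_le_mul_log_one_add_growth (hL : 1 ≤ L) (hy : 1 ≤ y) :
    log (1 + y) ≤ L * log (1 + (y + (L - 1) * log y) / L) := by
  have hL1 : (1 : ℝ) ≤ L := by exact_mod_cast hL
  have hlog0 : 0 ≤ log y := log_nonneg hy
  have h := mul_log_one_add_le_log_one_add_mul (inv_nonneg.2 (by positivity : (0 : ℝ) ≤ L))
    (inv_le_one_of_one_le₀ hL1) (by linarith : 0 ≤ y)
  rw [inv_mul_eq_div, inv_mul_eq_div, div_le_iff₀' (by positivity)] at h
  refine h.trans (mul_le_mul_of_nonneg_left (log_le_log (by positivity) ?_) (by positivity))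
  gcongr
  nlinarith

end GrowthRate

end BestUserScheduling

open BestUserScheduling

/-- Fix `L ≥ 1` and `P > 0`; let `F(x) = 1 − e^{−Lx} Σ_{k<L} (Lx)^k/k!` with density
`f(x) = L e^{−Lx}(Lx)^{L−1}/(L−1)!`. The best-user scheduler throughput with `L`
antennas, `∫_0^∞ log(1+Px) · N F(x)^{N−1} f(x) dx`, is
`Θ(log(1 + (log N + (L−1) log log N)/L))`. -/
theorem best_user_multiantenna_throughput_theta (L : ℕ) (hL : 1 ≤ L) (P : ℝ) (hP : 0 < P) :
    ∃ c₁ c₂ : ℝ, ∃ N₀ : ℕ, 0 < c₁ ∧ c₁ ≤ c₂ ∧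
      ∀ N : ℕ, N₀ ≤ N →
        c₁ * Real.log (1 + (Real.log N + ((L : ℝ) - 1) * Real.log (Real.log N)) / L) ≤
            (∫ x in Ioi (0 : ℝ), Real.log (1 + P * x) *
              ((N : ℝ) *
                (1 - Real.exp (-(L : ℝ) * x) *
                  ∑ k ∈ Finset.range L, ((L : ℝ) * x) ^ k / (Nat.factorial k : ℝ)) ^ (N - 1) *
                ((L : ℝ) * Real.exp (-(L : ℝ) * x) * ((L : ℝ) * x) ^ (L - 1) /
                  (Nat.factorial (L - 1) : ℝ)))) ∧
          (∫ x in Ioi (0 : ℝ), Real.log (1 + P * x) *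
              ((N : ℝ) *
                (1 - Real.exp (-(L : ℝ) * x) *
                  ∑ k ∈ Finset.range L, ((L : ℝ) * x) ^ k / (Nat.factorial k : ℝ)) ^ (N - 1) *
                ((L : ℝ) * Real.exp (-(L : ℝ) * x) * ((L : ℝ) * x) ^ (L - 1) /
                  (Nat.factorial (L - 1) : ℝ)))) ≤
            c₂ * Real.log (1 + (Real.log N + ((L : ℝ) - 1) * Real.log (Real.log N)) / L) := by
  have hL1 : (1 : ℝ) ≤ L := by exact_mod_cast hL
  set K := 1 + log (1 + 2 * P / L) + P * 2 ^ (L + 1)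
  have hK : 1 ≤ K := by
    have : 0 ≤ 2 * P / L := by positivity
    have : 0 ≤ log (1 + 2 * P / L) := log_nonneg (by linarith)
    have : 0 ≤ P * 2 ^ (L + 1) := by positivity
    linarith
  refine ⟨min (P / L) 1 / 2, L * K, ⌈exp (exp 1)⌉₊, by positivity, ?_, fun N hN => ?_⟩
  · calc min (P / L) 1 / 2 ≤ 1 := by linarith [min_le_right (P / L) 1]
      _ ≤ L * K := one_le_mul_of_one_le_of_one_le hL1 hK
  have hexp : exp (exp 1) ≤ N := Nat.ceil_le.1 hN
  have hlogN : exp 1 ≤ log N := (le_log_iff_exp_le (by linarith [exp_pos (exp 1)])).2 hexp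
  have hlogN1 : 1 ≤ log N := (one_le_exp zero_le_one).trans hlogN
  have hN1 : 1 ≤ N := by exact_mod_cast (one_le_exp (exp_pos 1).le).trans hexp
  have hloglogN : 1 ≤ log (1 + log N) :=
    (le_log_iff_exp_le (by linarith)).2 (by linarith)
  change _ ≤ throughput L P N ∧ throughput L P N ≤ _
  constructor
  · calc _ ≤ min (P / L) 1 / 2 * log (1 + log N) :=
          mul_le_mul_of_nonneg_left (log_one_add_growth_le hL hlogN1) (by positivity)
      _ ≤ throughput L P N := min_mul_log_one_add_log_le_throughput hL hP.le hN1
  · calc throughput L P N ≤ K * log (1 + log N) :=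
          throughput_le_mul_log_one_add_log hL hP.le hloglogN
      _ ≤ K * (L * _) := mul_le_mul_of_nonneg_left
          (log_one_add_le_mul_log_one_add_growth hL hlogN1) (by linarith)
      _ = L * K * _ := by ring
end

section
/- Fix an integer G ≥ 1 and a real P > 0. Then lim_{N→∞} N · ∫_0^∞ log(1+Px) · G N e^{−Nx} (1−e^{−Nx})^{G−1} dx = P · Σ_{k=1}^G 1/k, the limit taken along positive integers N → ∞. That is, the total throughput of the best-among-worst-users multi-group scheduler converges to P times the G-th harmonic number, and hence is Θ(log G) in the number of groups G. -/
/-!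
Substituting `y = N x` turns the throughput into `∫₀^∞ N log (1 + P y / N) f_G(y) dy`, where
`f_G` is the density of the maximum of `G` i.i.d. unit exponentials. Since
`0 ≤ N log (1 + t / N) ≤ t → t`, dominated convergence gives the limit `P · E[max]`, and the
mean of that maximum is the harmonic number `H_G`.
-/

open Real Set Finset Filter

open MeasureTheory Topology

lemma nat_mul_log_one_add_div_nonneg {t : ℝ} (ht : 0 ≤ t) (n : ℕ) :
    0 ≤ (n : ℝ) * log (1 + t / n) :=
  mul_nonneg n.cast_nonneg (log_nonneg (by simp only [le_add_iff_nonneg_right]; positivity))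

lemma nat_mul_log_one_add_div_le {t : ℝ} (ht : 0 ≤ t) (n : ℕ) :
    (n : ℝ) * log (1 + t / n) ≤ t := by
  rcases n.eq_zero_or_pos with rfl | hn
  · simpa using ht
  have hn' : (0 : ℝ) < n := Nat.cast_pos.mpr hn
  calc (n : ℝ) * log (1 + t / n) ≤ n * (t / n) := by
        gcongr
        linarith [log_le_sub_one_of_pos (show 0 < 1 + t / n by positivity)]
    _ = t := mul_div_cancel₀ t hn'.ne'

lemma tendsto_integral_Ioi_nat_mul_log_one_add_mul_div {P : ℝ} (hP : 0 ≤ P) {g : ℝ → ℝ}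
    (hg_meas : AEStronglyMeasurable g (volume.restrict (Ioi 0)))
    (hg : IntegrableOn (fun y => y * g y) (Ioi 0)) :
    Tendsto (fun n : ℕ => ∫ y in Ioi 0, (n : ℝ) * log (1 + P * y / n) * g y) atTop
      (𝓝 (P * ∫ y in Ioi 0, y * g y)) := by
  rw [← integral_const_mul]
  refine tendsto_integral_of_dominated_convergence (fun y => P * ‖y * g y‖)
    (fun n => ?_) (hg.norm.const_mul P) (fun n => ?_) ?_
  · exact ((measurable_const.mul (measurable_log.comp (by fun_prop))).aestronglyMeasurable).mul
      hg_meas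
  · filter_upwards [ae_restrict_mem measurableSet_Ioi] with y (hy : 0 < y)
    have hPy : 0 ≤ P * y := mul_nonneg hP hy.le
    rw [norm_mul, Real.norm_of_nonneg (nat_mul_log_one_add_div_nonneg hPy n), norm_mul,
      Real.norm_of_nonneg hy.le, ← mul_assoc]
    exact mul_le_mul_of_nonneg_right (nat_mul_log_one_add_div_le hPy n) (norm_nonneg _)
  · refine ae_of_all _ fun y => ?_
    simpa only [Function.comp_def, mul_assoc] using
      ((tendsto_mul_log_one_add_div_atTop (P * y)).comp tendsto_natCast_atTop_atTop).mul_const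
        (g y)

lemma integral_Ioi_mul_comp_mul_left {c : ℝ} (hc : 0 < c) (f g : ℝ → ℝ) :
    c * ∫ x in Ioi 0, f x * (c * g (c * x)) = ∫ y in Ioi 0, c * f (y / c) * g y := by
  have := integral_comp_mul_left_Ioi' (fun y => c * f (y / c) * g y) 0 hc
  simp only [mul_zero, smul_eq_mul, mul_div_cancel_left₀ _ hc.ne'] at this
  rw [← this]
  congr 1
  refine integral_congr_ae (ae_of_all _ fun x => ?_)
  ring

/-- The density of the maximum of `G` independent unit-mean exponential variables. -/
noncomputable def maxExpDensity (G : ℕ) (y : ℝ) : ℝ :=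
  G * exp (-y) * (1 - exp (-y)) ^ (G - 1)

/-- `∫₀^y t · maxExpDensity G t dt`, in closed form. -/
noncomputable def maxExpPartialMean (G : ℕ) (y : ℝ) : ℝ :=
  ∑ k ∈ range G, (1 - exp (-y)) ^ (k + 1) / (k + 1) - y * (1 - (1 - exp (-y)) ^ G)

lemma one_sub_exp_neg_nonneg {y : ℝ} (hy : 0 ≤ y) : 0 ≤ 1 - exp (-y) :=
  sub_nonneg.mpr (exp_le_one_iff.mpr (neg_nonpos.mpr hy))

lemma maxExpDensity_nonneg (G : ℕ) {y : ℝ} (hy : 0 ≤ y) : 0 ≤ maxExpDensity G y := by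
  unfold maxExpDensity
  have := one_sub_exp_neg_nonneg hy
  positivity

lemma continuous_maxExpDensity (G : ℕ) : Continuous (maxExpDensity G) := by
  unfold maxExpDensity
  fun_prop

lemma hasDerivAt_maxExpPartialMean (G : ℕ) (y : ℝ) :
    HasDerivAt (maxExpPartialMean G) (y * maxExpDensity G y) y := by
  set v := 1 - exp (-y) with hv
  have hv' : HasDerivAt (fun y => 1 - exp (-y)) (exp (-y)) y := by
    simpa using ((hasDerivAt_neg y).exp).const_sub 1
  have hsum : HasDerivAt (fun y => ∑ k ∈ range G, (1 - exp (-y)) ^ (k + 1) / (k + 1))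
      (∑ k ∈ range G, v ^ k * exp (-y)) y := by
    refine HasDerivAt.fun_sum fun k _ => ((hv'.pow (k + 1)).div_const _).congr_deriv ?_
    rw [hv, Nat.add_sub_cancel]
    field_simp
    push_cast
    ring
  have htail : HasDerivAt (fun y => y * (1 - (1 - exp (-y)) ^ G))
      (1 * (1 - v ^ G) + y * -(G * v ^ (G - 1) * exp (-y))) y :=
    (hasDerivAt_id' y).mul ((hv'.pow G).const_sub 1)
  refine (hsum.sub htail).congr_deriv ?_
  rw [← sum_mul, ← geom_sum_mul_neg, maxExpDensity, ← hv, show 1 - v = exp (-y) by ring]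
  ring

lemma one_sub_one_sub_exp_neg_pow_le (G : ℕ) {y : ℝ} (hy : 0 ≤ y) :
    1 - (1 - exp (-y)) ^ G ≤ G * exp (-y) := by
  have := one_add_mul_le_pow (a := -exp (-y))
    (by linarith [exp_le_one_iff.mpr (neg_nonpos.mpr hy)]) G
  simp only [← sub_eq_add_neg, mul_neg] at this
  linarith

lemma tendsto_maxExpPartialMean (G : ℕ) :
    Tendsto (maxExpPartialMean G) atTop (𝓝 (harmonic G)) := by
  have hsum : Tendsto (fun y => ∑ k ∈ range G, (1 - exp (-y)) ^ (k + 1) / (k + 1)) atTop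
      (𝓝 (harmonic G)) := by
    push_cast [harmonic]
    refine tendsto_finsetSum _ fun k _ => ?_
    simpa using
      ((tendsto_exp_neg_atTop_nhds_zero.const_sub 1).pow (k + 1)).div_const ((k : ℝ) + 1)
  have htail : Tendsto (fun y => y * (1 - (1 - exp (-y)) ^ G)) atTop (𝓝 0) := by
    refine squeeze_zero' ?_ ?_
      (by simpa using (tendsto_pow_mul_exp_neg_atTop_nhds_zero 1).const_mul (G : ℝ))
    · filter_upwards [eventually_ge_atTop 0] with y hy
      exact mul_nonneg hy
        (sub_nonneg.mpr (pow_le_one₀ (one_sub_exp_neg_nonneg hy) (by simp [exp_nonneg])))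
    · filter_upwards [eventually_ge_atTop 0] with y hy
      calc y * (1 - (1 - exp (-y)) ^ G) ≤ y * (G * exp (-y)) := by
            gcongr; exact one_sub_one_sub_exp_neg_pow_le G hy
        _ = G * (y * exp (-y)) := by ring
  rw [← sub_zero (harmonic G : ℝ)]
  exact hsum.sub htail

lemma integrableOn_mul_maxExpDensity (G : ℕ) :
    IntegrableOn (fun y => y * maxExpDensity G y) (Ioi 0) :=
  integrableOn_Ioi_deriv_of_nonneg
    (hasDerivAt_maxExpPartialMean G 0).continuousAt.continuousWithinAt
    (fun y _ => hasDerivAt_maxExpPartialMean G y)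
    (fun _ (hy : 0 < _) => mul_nonneg hy.le (maxExpDensity_nonneg G hy.le))
    (tendsto_maxExpPartialMean G)

lemma integral_mul_maxExpDensity (G : ℕ) :
    ∫ y in Ioi 0, y * maxExpDensity G y = harmonic G := by
  rw [integral_Ioi_of_hasDerivAt_of_tendsto
    (hasDerivAt_maxExpPartialMean G 0).continuousAt.continuousWithinAt
    (fun y _ => hasDerivAt_maxExpPartialMean G y) (integrableOn_mul_maxExpDensity G)
    (tendsto_maxExpPartialMean G)]
  simp [maxExpPartialMean]

theorem best_among_worst_throughput_limit_general (G : ℕ) (P : ℝ) (hP : 0 < P) :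
    Tendsto (fun N : ℕ =>
        (N : ℝ) * ∫ x in Ioi (0 : ℝ), Real.log (1 + P * x) *
          ((G : ℝ) * (N : ℝ) * Real.exp (-(N : ℝ) * x) *
            (1 - Real.exp (-(N : ℝ) * x)) ^ (G - 1)))
      atTop (nhds (P * ∑ k ∈ Finset.Icc 1 G, 1 / (k : ℝ))) := by
  have hlim := tendsto_integral_Ioi_nat_mul_log_one_add_mul_div hP.le
    (continuous_maxExpDensity G).aestronglyMeasurable (integrableOn_mul_maxExpDensity G)
  rw [integral_mul_maxExpDensity, harmonic_eq_sum_Icc] at hlim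
  push_cast at hlim
  simp only [one_div]
  refine hlim.congr' ?_
  filter_upwards [eventually_gt_atTop 0] with N hN
  simp only [mul_div_assoc]
  rw [← integral_Ioi_mul_comp_mul_left (Nat.cast_pos.mpr hN) (fun x => log (1 + P * x))
    (maxExpDensity G)]
  congr 1
  refine integral_congr_ae (ae_of_all _ fun x => ?_)
  simp only [maxExpDensity, neg_mul]
  ring

/-- Fix `G ≥ 1` and `P > 0`. Then
`lim_{N→∞} N ∫_0^∞ log(1+Px) · G N e^{−Nx}(1−e^{−Nx})^{G−1} dx = P Σ_{k=1}^G 1/k`: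
the best-among-worst-users multi-group throughput tends to `P` times the `G`-th
harmonic number, hence is `Θ(log G)`. -/
theorem best_among_worst_throughput_limit (G : ℕ) (hG : 1 ≤ G) (P : ℝ) (hP : 0 < P) :
    Tendsto (fun N : ℕ =>
        (N : ℝ) * ∫ x in Ioi (0 : ℝ), Real.log (1 + P * x) *
          ((G : ℝ) * (N : ℝ) * Real.exp (-(N : ℝ) * x) *
            (1 - Real.exp (-(N : ℝ) * x)) ^ (G - 1)))
      atTop (nhds (P * ∑ k ∈ Finset.Icc 1 G, 1 / (k : ℝ))) :=
  best_among_worst_throughput_limit_general G P hP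
end

section
/- Let N be a positive integer, α a positive integer dividing N with 1 ≤ α ≤ N, P > 0 a real, and define Ei(−a) = −∫_a^∞ e^{−t}/t dt for a > 0. Let F(x) = Σ_{k=N−N/α+1}^{N} C(N,k) (1−e^{−x})^k e^{−(N−k)x} for x ≥ 0. Then the average throughput of the general static scheduling scheme satisfies (N/α) ∫_0^∞ log(1+Px) dF(x) = (N/α) [ Σ_{i=1}^{N} C(N,i) (−1)^i e^{i/P} Ei(−i/P) + Σ_{k=N−N/α+1}^{N−1} C(N,k) Σ_{i=0}^{k} C(k,i) (−1)^i e^{(N−k+i)/P} Ei(−(N−k+i)/P) ]. -/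
open Real Set Finset

/-- `EiNeg a = Ei(−a) = −∫_a^∞ e^{−t}/t dt` for `a > 0`. -/
noncomputable def EiNeg (a : ℝ) : ℝ := -∫ t in Set.Ioi a, Real.exp (-t) / t

/-!
Expanding `(1 - e^{-y})^k` binomially writes the cdf `F` as a finite combination of exponentials
`e^{-b y}` with rates `b = N - k + i ≥ 0`, so `∫ log (1 + P x) dF` is the same combination of the
moments `∫_0^∞ log (1 + P x) b e^{-b x} dx` of exponential laws. For `b > 0`, an integration by
parts turns such a moment into `∫_0^∞ P / (1 + P x) e^{-b x} dx`, and the substitution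
`t = b (x + 1/P)` identifies it with `-e^{b/P} Ei(-b/P)`. The only vanishing rate, `k = N`, `i = 0`,
contributes nothing, which is why the top term `k = N` of the cdf appears as a sum over `i ≥ 1`.
-/

open MeasureTheory Filter Topology

theorem integral_comp_add_right_Ioi {E : Type*} [NormedAddCommGroup E] [NormedSpace ℝ E]
    (g : ℝ → E) (a d : ℝ) :
    ∫ x in Ioi a, g (x + d) = ∫ x in Ioi (a + d), g x := by
  have h := (measurePreserving_add_right volume d).setIntegral_preimage_emb
    (measurableEmbedding_addRight d) g (Ioi (a + d))
  rwa [preimage_add_const_Ioi, add_sub_cancel_right] at h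

section LogOneAddMul

variable {P c : ℝ}

theorem continuousOn_log_one_add_mul_mul_exp_neg (hP : 0 ≤ P) :
    ContinuousOn (fun x ↦ log (1 + P * x) * exp (-(c * x))) (Ici 0) := by
  refine (ContinuousOn.log (by fun_prop) fun x hx ↦ ?_).mul (by fun_prop)
  have : 0 ≤ P * x := mul_nonneg hP hx
  positivity

theorem tendsto_log_one_add_mul_mul_exp_neg (hP : 0 ≤ P) (hc : 0 < c) :
    Tendsto (fun x ↦ log (1 + P * x) * exp (-(c * x))) atTop (𝓝 0) := by
  have hlin : Tendsto (fun x ↦ P / c * ((c * x) ^ 1 * exp (-(c * x)))) atTop (𝓝 0) := by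
    simpa using ((tendsto_pow_mul_exp_neg_atTop_nhds_zero 1).comp
      (tendsto_id.const_mul_atTop hc)).const_mul (P / c)
  refine squeeze_zero' ?_ ?_ hlin
  · filter_upwards [eventually_ge_atTop 0] with x hx
    exact mul_nonneg (log_nonneg (by nlinarith)) (exp_pos _).le
  · filter_upwards [eventually_ge_atTop 0] with x hx
    have hlog : log (1 + P * x) ≤ P * x := by
      linarith [log_le_sub_one_of_pos (show 0 < 1 + P * x by nlinarith)]
    calc log (1 + P * x) * exp (-(c * x)) ≤ P * x * exp (-(c * x)) := by gcongr
      _ = P / c * ((c * x) ^ 1 * exp (-(c * x))) := by field_simp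

theorem integrableOn_log_one_add_mul_mul_exp_neg (hP : 0 ≤ P) (hc : 0 < c) :
    IntegrableOn (fun x ↦ log (1 + P * x) * exp (-(c * x))) (Ioi 0) := by
  refine integrable_of_isBigO_exp_neg (half_pos hc) (continuousOn_log_one_add_mul_mul_exp_neg hP)
    (Asymptotics.isLittleO_of_tendsto (fun x hx ↦ absurd hx (exp_ne_zero _)) ?_).isBigO
  refine (tendsto_log_one_add_mul_mul_exp_neg hP (half_pos hc)).congr fun x ↦ ?_
  rw [mul_div_assoc, ← exp_sub]
  ring_nf

theorem integrableOn_div_one_add_mul_mul_exp_neg (hP : 0 ≤ P) (hc : 0 < c) :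
    IntegrableOn (fun x ↦ P / (1 + P * x) * exp (-(c * x))) (Ioi 0) := by
  refine integrable_of_isBigO_exp_neg hc ?_ (Asymptotics.IsBigO.of_bound P ?_)
  · refine (ContinuousOn.div continuousOn_const (by fun_prop) fun x hx ↦ ?_).mul (by fun_prop)
    have : 0 ≤ P * x := mul_nonneg hP hx
    positivity
  · filter_upwards [eventually_ge_atTop (0 : ℝ)] with x hx
    have hPx : 0 ≤ P * x := mul_nonneg hP hx
    have hle : P / (1 + P * x) ≤ P := div_le_self hP (by linarith)
    rw [norm_mul, norm_of_nonneg (div_nonneg hP (by linarith)), norm_of_nonneg (exp_pos _).le,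
      norm_of_nonneg (exp_pos _).le, neg_mul]
    gcongr

theorem integral_div_one_add_mul_mul_exp_neg (hP : 0 < P) (hc : 0 < c) :
    ∫ x in Ioi 0, P / (1 + P * x) * exp (-(c * x)) =
      exp (c / P) * ∫ t in Ioi (c / P), exp (-t) / t := by
  calc ∫ x in Ioi 0, P / (1 + P * x) * exp (-(c * x))
      = ∫ x in Ioi 0, exp (c / P) * (c * (exp (-(c * x + c / P)) / (c * x + c / P))) := by
        refine setIntegral_congr_fun measurableSet_Ioi fun x (hx : 0 < x) ↦ ?_
        have hpos : 0 < 1 + P * x := by positivity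
        rw [neg_add, exp_add, exp_neg (c / P)]
        field_simp
        ring
    _ = exp (c / P) * (c * ∫ x in Ioi 0, exp (-(c * x + c / P)) / (c * x + c / P)) := by
        rw [integral_const_mul, integral_const_mul]
    _ = exp (c / P) * ∫ u in Ioi 0, exp (-(u + c / P)) / (u + c / P) := by
        rw [← smul_eq_mul c, integral_comp_mul_left_Ioi' (fun u ↦ exp (-(u + c / P)) / (u + c / P))
          0 hc, mul_zero]
    _ = exp (c / P) * ∫ t in Ioi (c / P), exp (-t) / t := by
        rw [integral_comp_add_right_Ioi (fun t ↦ exp (-t) / t), zero_add]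

theorem mul_integral_log_one_add_mul_mul_exp_neg (hP : 0 ≤ P) (hc : 0 < c) :
    c * ∫ x in Ioi 0, log (1 + P * x) * exp (-(c * x)) =
      ∫ x in Ioi 0, P / (1 + P * x) * exp (-(c * x)) := by
  have hderiv : ∀ x ∈ Ioi (0 : ℝ), HasDerivAt (fun x ↦ log (1 + P * x) * exp (-(c * x)))
      (P / (1 + P * x) * exp (-(c * x)) - c * (log (1 + P * x) * exp (-(c * x)))) x := by
    intro x hx
    have hPx : 0 ≤ P * x := mul_nonneg hP (le_of_lt hx)
    have hpos : 0 < 1 + P * x := by positivity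
    have hlog := (((hasDerivAt_id' x).const_mul P).const_add 1).log hpos.ne'
    have hexp := ((hasDerivAt_id' x).const_mul c).fun_neg.exp
    exact (hlog.fun_mul hexp).congr_deriv (by ring)
  have hint := (integrableOn_div_one_add_mul_mul_exp_neg hP hc).sub
    ((integrableOn_log_one_add_mul_mul_exp_neg hP hc).const_mul c)
  have hftc := integral_Ioi_of_hasDerivAt_of_tendsto
    ((continuousOn_log_one_add_mul_mul_exp_neg hP) 0 self_mem_Ici) hderiv hint
    (tendsto_log_one_add_mul_mul_exp_neg hP hc)
  rw [integral_sub (integrableOn_div_one_add_mul_mul_exp_neg hP hc)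
    ((integrableOn_log_one_add_mul_mul_exp_neg hP hc).const_mul c), integral_const_mul] at hftc
  simp only [mul_zero, add_zero, log_one, zero_mul, sub_zero] at hftc
  linarith

theorem integral_log_one_add_mul_mul_exp_density (hP : 0 < P) (hc : 0 < c) :
    ∫ x in Ioi 0, log (1 + P * x) * (c * exp (-(c * x))) = -(exp (c / P) * EiNeg (c / P)) := by
  simp_rw [mul_left_comm _ c, integral_const_mul]
  rw [mul_integral_log_one_add_mul_mul_exp_neg hP.le hc, integral_div_one_add_mul_mul_exp_neg hP hc,
    EiNeg, mul_neg, neg_neg]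

theorem integrableOn_log_one_add_mul_mul_exp_density (hP : 0 ≤ P) (hc : 0 ≤ c) :
    IntegrableOn (fun x ↦ log (1 + P * x) * (c * exp (-(c * x)))) (Ioi 0) := by
  rcases hc.eq_or_lt with rfl | hc
  · simp
  · refine IntegrableOn.congr_fun ((integrableOn_log_one_add_mul_mul_exp_neg hP hc).const_mul c)
      (fun x _ ↦ ?_) measurableSet_Ioi
    ring

end LogOneAddMul

theorem integral_log_one_add_mul_mul_deriv_sum_exp_neg {ι : Type*} {P : ℝ} (hP : 0 ≤ P)
    (s : Finset ι) (w b : ι → ℝ) (hb : ∀ j ∈ s, 0 ≤ b j) :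
    ∫ x in Ioi 0, log (1 + P * x) * deriv (fun y ↦ ∑ j ∈ s, w j * exp (-(b j * y))) x =
      -∑ j ∈ s, w j * ∫ x in Ioi 0, log (1 + P * x) * (b j * exp (-(b j * x))) := by
  have hderiv (x : ℝ) : deriv (fun y ↦ ∑ j ∈ s, w j * exp (-(b j * y))) x =
      ∑ j ∈ s, w j * -(b j * exp (-(b j * x))) := by
    refine (HasDerivAt.fun_sum fun j _ ↦
      (((hasDerivAt_id' x).const_mul (b j)).fun_neg.exp.const_mul (w j))).deriv.trans ?_
    exact sum_congr rfl fun j _ ↦ by ring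
  have hint : ∀ j ∈ s, IntegrableOn
      (fun x ↦ w j * (log (1 + P * x) * (b j * exp (-(b j * x))))) (Ioi 0) := fun j hj ↦
    (integrableOn_log_one_add_mul_mul_exp_density hP (hb j hj)).const_mul (w j)
  simp_rw [hderiv, mul_neg, sum_neg_distrib, mul_neg, integral_neg, mul_sum, mul_left_comm _ (w _),
    integral_finsetSum s hint, integral_const_mul]

theorem one_sub_exp_neg_pow_mul_exp_neg (k : ℕ) (a y : ℝ) :
    (1 - exp (-y)) ^ k * exp (-(a * y)) =
      ∑ i ∈ range (k + 1), (k.choose i : ℝ) * (-1) ^ i * exp (-((a + i) * y)) := by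
  rw [sub_eq_neg_add, add_pow, sum_mul]
  refine sum_congr rfl fun i _ ↦ ?_
  rw [neg_pow, ← exp_nat_mul, one_pow, mul_one, show -((a + i) * y) = i * -y + -(a * y) by ring,
    exp_add]
  ring

theorem sum_range_add_one_eq_add_sum_Icc {M : Type*} [AddCommMonoid M] (f : ℕ → M) (n : ℕ) :
    ∑ i ∈ range (n + 1), f i = f 0 + ∑ i ∈ Finset.Icc 1 n, f i := by
  rw [sum_range_succ', add_comm, range_eq_Ico, sum_Ico_add' f, zero_add,
    Finset.Ico_add_one_right_eq_Icc]

theorem integral_log_one_add_mul_mul_deriv_sum_choose_one_sub_exp_neg_pow {P : ℝ} (hP : 0 < P)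
    {m N : ℕ} (hm : 1 ≤ m) (hmN : m ≤ N) :
    ∫ x in Ioi 0, log (1 + P * x) * deriv (fun y ↦ ∑ k ∈ Icc m N,
        (N.choose k : ℝ) * (1 - exp (-y)) ^ k * exp (-(((N : ℝ) - k) * y))) x =
      ∑ i ∈ Icc 1 N, (N.choose i : ℝ) * (-1) ^ i * exp (i / P) * EiNeg (i / P) +
        ∑ k ∈ Icc m (N - 1), (N.choose k : ℝ) * ∑ i ∈ range (k + 1),
          (k.choose i : ℝ) * (-1) ^ i * exp ((N - k + i) / P) * EiNeg ((N - k + i) / P) := by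
  set s := (Finset.Icc m N).sigma fun k ↦ range (k + 1)
  have hcdf : (fun y ↦ ∑ k ∈ Icc m N,
        (N.choose k : ℝ) * (1 - exp (-y)) ^ k * exp (-(((N : ℝ) - k) * y))) =
      fun y ↦ ∑ j ∈ s, (N.choose j.1 * (j.1.choose j.2 * (-1) ^ j.2) : ℝ) *
        exp (-((N - j.1 + j.2 : ℝ) * y)) := by
    funext y
    rw [sum_sigma]
    refine sum_congr rfl fun k _ ↦ ?_
    rw [mul_assoc, one_sub_exp_neg_pow_mul_exp_neg, mul_sum]
    exact sum_congr rfl fun i _ ↦ by ring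
  have hrate : ∀ j ∈ s, (0 : ℝ) ≤ N - j.1 + j.2 := fun j hj ↦ by
    have : (j.1 : ℝ) ≤ N := by exact_mod_cast (Finset.mem_Icc.mp (mem_sigma.mp hj).1).2
    positivity
  have hEi (b : ℝ) (hb : 0 < b) :
      -∫ x in Ioi 0, log (1 + P * x) * (b * exp (-(b * x))) = exp (b / P) * EiNeg (b / P) := by
    rw [integral_log_one_add_mul_mul_exp_density hP hb, neg_neg]
  have hIcc : Finset.Icc m N = insert N (Finset.Icc m (N - 1)) := by
    ext k
    simp only [Finset.mem_Icc, Finset.mem_insert]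
    omega
  rw [hcdf, integral_log_one_add_mul_mul_deriv_sum_exp_neg hP.le s _ _ hrate, sum_sigma,
    ← sum_neg_distrib, hIcc, sum_insert (by simp; omega), sum_range_add_one_eq_add_sum_Icc]
  congr 1
  · simp only [sub_self, zero_add, Nat.cast_zero, zero_mul, mul_zero, integral_zero, neg_zero,
      ← sum_neg_distrib]
    refine sum_congr rfl fun i hi ↦ ?_
    have hi : (0 : ℝ) < i := by exact_mod_cast (Finset.mem_Icc.mp hi).1
    rw [← mul_neg, hEi i hi, Nat.choose_self, Nat.cast_one]
    ring
  · refine sum_congr rfl fun k hk ↦ ?_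
    have hk : (k : ℝ) + 1 ≤ N := by exact_mod_cast (by simp at hk; omega : k + 1 ≤ N)
    rw [← sum_neg_distrib, mul_sum]
    refine sum_congr rfl fun i _ ↦ ?_
    have hb : (0 : ℝ) < N - k + i := by linarith [i.cast_nonneg (α := ℝ)]
    rw [← mul_neg, hEi _ hb]
    ring

theorem general_static_scheduler_throughput_general (N α : ℕ) (hα1 : 1 ≤ α) (hαN : α ≤ N)
    (P : ℝ) (hP : 0 < P) :
    ((N : ℝ) / α) * (∫ x in Ioi (0 : ℝ), Real.log (1 + P * x) *
        deriv (fun y : ℝ => ∑ k ∈ Finset.Icc (N - N / α + 1) N,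
          (N.choose k : ℝ) * (1 - Real.exp (-y)) ^ k *
            Real.exp (-(((N : ℝ) - k) * y))) x) =
      ((N : ℝ) / α) *
        ((∑ i ∈ Finset.Icc 1 N, (N.choose i : ℝ) * (-1 : ℝ) ^ i *
            Real.exp ((i : ℝ) / P) * EiNeg ((i : ℝ) / P)) +
          ∑ k ∈ Finset.Icc (N - N / α + 1) (N - 1), (N.choose k : ℝ) *
            ∑ i ∈ Finset.range (k + 1), (k.choose i : ℝ) * (-1 : ℝ) ^ i *
              Real.exp (((N : ℝ) - k + i) / P) * EiNeg (((N : ℝ) - k + i) / P)) := by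
  have hquot : 1 ≤ N / α := (Nat.one_le_div_iff hα1).mpr hαN
  rw [integral_log_one_add_mul_mul_deriv_sum_choose_one_sub_exp_neg_pow hP
    (Nat.le_add_left 1 _) (by omega)]

/-- For `N ≥ α ≥ 1` with `α ∣ N` and `P > 0`, with `F` the cdf of the
`(N−N/α+1)`-th order statistic of `N` i.i.d. unit-mean exponentials, the average
throughput of the general static scheduling scheme satisfies
`(N/α) ∫_0^∞ log(1+Px) dF(x) = (N/α)[Σ_{i=1}^N C(N,i)(−1)^i e^{i/P} Ei(−i/P)
 + Σ_{k=N−N/α+1}^{N−1} C(N,k) Σ_{i=0}^k C(k,i)(−1)^i e^{(N−k+i)/P} Ei(−(N−k+i)/P)]`. -/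
theorem general_static_scheduler_throughput (N α : ℕ) (hα1 : 1 ≤ α) (hαN : α ≤ N)
    (hdvd : α ∣ N) (P : ℝ) (hP : 0 < P) :
    ((N : ℝ) / α) * (∫ x in Ioi (0 : ℝ), Real.log (1 + P * x) *
        deriv (fun y : ℝ => ∑ k ∈ Finset.Icc (N - N / α + 1) N,
          (N.choose k : ℝ) * (1 - Real.exp (-y)) ^ k *
            Real.exp (-(((N : ℝ) - k) * y))) x) =
      ((N : ℝ) / α) *
        ((∑ i ∈ Finset.Icc 1 N, (N.choose i : ℝ) * (-1 : ℝ) ^ i *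
            Real.exp ((i : ℝ) / P) * EiNeg ((i : ℝ) / P)) +
          ∑ k ∈ Finset.Icc (N - N / α + 1) (N - 1), (N.choose k : ℝ) *
            ∑ i ∈ Finset.range (k + 1), (k.choose i : ℝ) * (-1 : ℝ) ^ i *
              Real.exp (((N : ℝ) - k + i) / P) * EiNeg (((N : ℝ) - k + i) / P)) :=
  general_static_scheduler_throughput_general N α hα1 hαN P hP
end
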